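/- arXiv:1503.02204 — 2 statements merged into one kernel-verified Lean document; each statement's English description precedes it below -/
import Mathlib

section
/- Let K = ℂ((x)) and let M be a finite-dimensional differential module over K. If M ⊗_K M is regular, then the dual module M^∨ = Hom_K(M, K), with derivation (∂φ)(m) = (φ(m))' − φ(∂m), satisfies: M ⊗_K M^∨ is regular. -/
noncomputable section

open scoped TensorProduct

/-- `K = ℂ((x))`, the field of formal Laurent series. -/
abbrev K : Type := LaurentSeries ℂ

/-- `O = ℂ[[x]]`, the ring of formal power series. -/
abbrev O : Type := PowerSeries ℂ

/-- The formal derivative `f ↦ f'` on `ℂ((x))`. -/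
def der (f : K) : K := LaurentSeries.derivative ℂ f

/-- The element `x ∈ ℂ((x))`. -/
def xK : K := algebraMap O K PowerSeries.X

/-- Any `ℂ((x))`-module is a `ℂ[[x]]`-module by restriction of scalars. -/
instance (M : Type*) [AddCommGroup M] [Module K M] : Module O M :=
  Module.compHom M (algebraMap O K)

/-- A differential-module structure on a `K`-vector space: an additive map satisfying the
Leibniz rule with respect to `d/dx` on `K = ℂ((x))`. -/
def IsDerivation {M : Type*} [AddCommGroup M] [Module K M] (D : M → M) : Prop :=
  (∀ a b : M, D (a + b) = D a + D b) ∧ ∀ (f : K) (m : M), D (f • m) = der f • m + f • D m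

/-- A `ℂ[[x]]`-lattice in a `K`-vector space: a finitely generated `ℂ[[x]]`-submodule
spanning `M` over `K`. -/
def IsLattice {M : Type*} [AddCommGroup M] [Module K M] (L : Submodule O M) : Prop :=
  L.FG ∧ Submodule.span K (L : Set M) = ⊤

/-- A differential module `(M, ∂)` over `ℂ((x))` is regular if it contains a
`ℂ[[x]]`-lattice stable under `x∂`. -/
def IsRegularDiff {M : Type*} [AddCommGroup M] [Module K M] (D : M → M) : Prop :=
  ∃ L : Submodule O M, IsLattice L ∧ ∀ m ∈ L, xK • D m ∈ L

/-!
The comparison goes through endomorphisms instead of exponential factors.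
`m ⊗ φ ↦ (a ⊗ b ↦ φ a • m ⊗ b)` embeds `M ⊗ M^∨ ≅ End M` into `End (M ⊗ M)` as a
differential submodule, where `End (M ⊗ M)` carries the commutator derivation `g ↦ [∂, g]`.
If `L` is an `x∂`-stable lattice of `M ⊗ M`, the endomorphisms preserving `L` form an
`x∂`-stable lattice of `End (M ⊗ M)`, and its preimage is one of `M ⊗ M^∨`.
-/

instance (M : Type*) [AddCommGroup M] [Module K M] : IsScalarTower O K M :=
  ⟨fun o k m => by rw [Algebra.smul_def, mul_smul]; rfl⟩

theorem Submodule.span_eq_top_iff_forall_exists_smul_mem {R F V : Type*} [CommRing R]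
    [IsDomain R] [Field F] [Algebra R F] [IsFractionRing R F] [AddCommGroup V] [Module F V]
    [Module R V] [IsScalarTower R F V] (L : Submodule R V) :
    span F (L : Set V) = ⊤ ↔ ∀ v, ∃ c : R, c ≠ 0 ∧ c • v ∈ L := by
  refine ⟨fun h v => ?_, fun h => eq_top_iff.2 fun v _ => ?_⟩
  · obtain ⟨y, hy, ⟨c, hc⟩, rfl⟩ :=
      (IsLocalization.mem_span_iff (nonZeroDivisors R)).1 (h ▸ mem_top : v ∈ span F (L : Set V))
    refine ⟨c, nonZeroDivisors.ne_zero hc, ?_⟩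
    rw [← algebraMap_smul F, smul_smul, IsLocalization.mk'_spec'_mk, map_one, one_smul]
    simpa using hy
  · obtain ⟨c, hc, hcv⟩ := h v
    have hc' : algebraMap R F c ≠ 0 := (map_ne_zero_iff _ (IsFractionRing.injective R F)).2 hc
    rw [← inv_smul_smul₀ hc' v, algebraMap_smul]
    exact smul_mem _ _ (subset_span hcv)

theorem IsRegularDiff.of_injective {N P : Type*} [AddCommGroup N] [Module K N]
    [AddCommGroup P] [Module K P] {DN : N → N} {DP : P → P} (j : N →ₗ[K] P)
    (hj : Function.Injective j) (hcomm : ∀ n, j (DN n) = DP (j n)) (h : IsRegularDiff DP) :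
    IsRegularDiff DN := by
  obtain ⟨L, ⟨hFG, hspan⟩, hstab⟩ := h
  let jO : N →ₗ[O] P := j.restrictScalars O
  have : IsNoetherian O L := isNoetherian_of_fg_of_noetherian L hFG
  refine ⟨L.comap jO, ⟨?_, ?_⟩, fun n hn => ?_⟩
  · have : IsNoetherian O (L.comap jO) :=
      isNoetherian_of_injective (jO.restrict fun _ h => h) fun a b hab =>
        Subtype.ext (hj (congrArg Subtype.val hab))
    exact Module.Finite.iff_fg.1 inferInstance
  · rw [Submodule.span_eq_top_iff_forall_exists_smul_mem] at hspan ⊢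
    intro n
    obtain ⟨c, hc, hcn⟩ := hspan (j n)
    exact ⟨c, hc, by simpa [jO] using hcn⟩
  · simpa [jO, hcomm] using hstab _ hn

section EndDeriv

variable {T : Type*} [AddCommGroup T] [Module K T]

theorem IsDerivation.map_zero {D : T → T} (hD : IsDerivation D) : D 0 = 0 := by
  simpa using hD.1 0 0

def endDeriv {DT : T → T} (hDT : IsDerivation DT) (g : Module.End K T) : Module.End K T where
  toFun t := DT (g t) - g (DT t)
  map_add' a b := by
    simp only [map_add, hDT.1]
    abel
  map_smul' c t := by
    simp only [map_smul, hDT.2, map_add, smul_sub, RingHom.id_apply]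
    abel

@[simp]
theorem endDeriv_apply {DT : T → T} (hDT : IsDerivation DT) (g : Module.End K T) (t : T) :
    endDeriv hDT g t = DT (g t) - g (DT t) := rfl

def endLattice (L : Submodule O T) : Submodule O (Module.End K T) where
  carrier := {g | ∀ t ∈ L, g t ∈ L}
  add_mem' hg hh t ht := L.add_mem (hg t ht) (hh t ht)
  zero_mem' _ _ := L.zero_mem
  smul_mem' c _ hg t ht := L.smul_mem c (hg t ht)

theorem endLattice_fg {L : Submodule O T} (hL : IsLattice L) : (endLattice L).FG := by
  obtain ⟨⟨s, hs⟩, hspan⟩ := hL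
  have : IsNoetherian O L := isNoetherian_of_fg_of_noetherian L ⟨s, hs⟩
  let ev : endLattice L →ₗ[O] (s → L) :=
    { toFun g i := ⟨g.1 i, g.2 i (hs ▸ Submodule.subset_span i.2)⟩
      map_add' _ _ := rfl
      map_smul' _ _ := rfl }
  have hsK : Submodule.span K (s : Set T) = ⊤ := by
    rw [← Submodule.span_span_of_tower O, hs, hspan]
  have hev : Function.Injective ev := fun a b hab =>
    Subtype.ext <| LinearMap.ext_on hsK fun t ht => congrArg Subtype.val (congrFun hab ⟨t, ht⟩)
  have : IsNoetherian O (endLattice L) := isNoetherian_of_injective ev hev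
  exact Module.Finite.iff_fg.1 inferInstance

theorem span_endLattice {L : Submodule O T} (hL : IsLattice L) :
    Submodule.span K (endLattice L : Set (Module.End K T)) = ⊤ := by
  classical
  obtain ⟨⟨s, rfl⟩, hspan⟩ := hL
  rw [Submodule.span_eq_top_iff_forall_exists_smul_mem] at hspan ⊢
  intro g
  choose c hc0 hc using hspan
  refine ⟨∏ i ∈ s, c (g i), Finset.prod_ne_zero_iff.2 fun i _ => hc0 _, fun t ht => ?_⟩
  induction ht using Submodule.span_induction with
  | mem i hi =>
    rw [LinearMap.smul_apply, ← Finset.mul_prod_erase s _ hi, mul_smul, smul_comm]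
    exact Submodule.smul_mem _ _ (hc _)
  | zero => simp
  | add _ _ _ _ h₁ h₂ => simpa only [map_add] using add_mem h₁ h₂
  | smul a _ _ h => simpa only [LinearMap.map_smul_of_tower] using Submodule.smul_mem _ a h

theorem IsRegularDiff.endDeriv {DT : T → T} (hDT : IsDerivation DT) (h : IsRegularDiff DT) :
    IsRegularDiff (endDeriv hDT) := by
  obtain ⟨L, hL, hstab⟩ := h
  refine ⟨endLattice L, ⟨endLattice_fg hL, span_endLattice hL⟩, fun g hg t ht => ?_⟩
  rw [LinearMap.smul_apply, endDeriv_apply, smul_sub, ← map_smul]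
  exact L.sub_mem (hstab _ (hg t ht)) (hg _ (hstab t ht))

end EndDeriv

theorem LinearMap.rTensorHom_injective {R M N P : Type*} [CommRing R] [AddCommGroup M]
    [Module R M] [AddCommGroup N] [Module R N] [AddCommGroup P] [Module R P]
    [Module.FaithfullyFlat R M] :
    Function.Injective (LinearMap.rTensorHom (R := R) (N := N) (P := P) M) :=
  (injective_iff_map_eq_zero _).2 fun f hf =>
    (Module.FaithfullyFlat.zero_iff_rTensor_zero R M f).2 hf

section TensorDual

variable (M : Type*) [AddCommGroup M] [Module K M]

def tensorDualToEnd : M ⊗[K] (M →ₗ[K] K) →ₗ[K] Module.End K (M ⊗[K] M) :=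
  LinearMap.rTensorHom M ∘ₗ dualTensorHom K M M ∘ₗ (TensorProduct.comm K M (M →ₗ[K] K)).toLinearMap

variable {M}

@[simp]
theorem tensorDualToEnd_tmul_tmul (m : M) (φ : M →ₗ[K] K) (a b : M) :
    tensorDualToEnd M (m ⊗ₜ φ) (a ⊗ₜ b) = φ a • m ⊗ₜ b := by
  simp [tensorDualToEnd, TensorProduct.smul_tmul']

theorem tensorDualToEnd_injective [FiniteDimensional K M] :
    Function.Injective (tensorDualToEnd M) := by
  rcases subsingleton_or_nontrivial M with hM | hM
  · exact Function.injective_of_subsingleton _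
  · exact (LinearMap.rTensorHom_injective (R := K)).comp <|
      (dualTensorHom_bijective (R := K) (M := M) (N := M)).1.comp
        (TensorProduct.comm K M _).injective

theorem tensorDualToEnd_map_deriv {D : M → M}
    {DT : M ⊗[K] M → M ⊗[K] M} (hDT : IsDerivation DT)
    (hDTmul : ∀ m n : M, DT (m ⊗ₜ n) = D m ⊗ₜ n + m ⊗ₜ D n)
    {DD : (M →ₗ[K] K) → (M →ₗ[K] K)} (hDDapp : ∀ φ m, DD φ m = der (φ m) - φ (D m))
    {DT2 : M ⊗[K] (M →ₗ[K] K) → M ⊗[K] (M →ₗ[K] K)} (hDT2 : IsDerivation DT2)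
    (hDT2mul : ∀ m φ, DT2 (m ⊗ₜ φ) = D m ⊗ₜ φ + m ⊗ₜ DD φ) (u : M ⊗[K] (M →ₗ[K] K)) :
    tensorDualToEnd M (DT2 u) = endDeriv hDT (tensorDualToEnd M u) := by
  induction u using TensorProduct.induction_on with
  | zero => ext; simp [hDT.map_zero, hDT2.map_zero]
  | tmul m φ =>
    refine TensorProduct.ext' fun a b => ?_
    simp only [hDT2mul, map_add, LinearMap.add_apply, tensorDualToEnd_tmul_tmul, endDeriv_apply,
      hDTmul, hDT.2, hDDapp, smul_add, sub_smul]
    abel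
  | add u v hu hv =>
    refine LinearMap.ext fun t => ?_
    simp only [hDT2.1, map_add, hu, hv, LinearMap.add_apply, endDeriv_apply, hDT.1]
    abel

end TensorDual

theorem tensor_dual_regular_of_tensor_square_regular_general
    (M : Type) [AddCommGroup M] [Module K M] [FiniteDimensional K M]
    (D : M → M)
    (DT : M ⊗[K] M → M ⊗[K] M) (hDT : IsDerivation DT)
    (hDTmul : ∀ (m n : M), DT (m ⊗ₜ n) = D m ⊗ₜ n + m ⊗ₜ D n)
    (hreg : IsRegularDiff DT)
    (DD : (M →ₗ[K] K) → (M →ₗ[K] K))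
    (hDDapp : ∀ (φ : (M →ₗ[K] K)) (m : M), DD φ m = der (φ m) - φ (D m))
    (DT2 : M ⊗[K] (M →ₗ[K] K) → M ⊗[K] (M →ₗ[K] K)) (hDT2 : IsDerivation DT2)
    (hDT2mul : ∀ (m : M) (φ : (M →ₗ[K] K)),
      DT2 (m ⊗ₜ φ) = D m ⊗ₜ φ + m ⊗ₜ DD φ) :
    IsRegularDiff DT2 :=
  (hreg.endDeriv hDT).of_injective (tensorDualToEnd M) tensorDualToEnd_injective
    (tensorDualToEnd_map_deriv hDT hDTmul hDDapp hDT2 hDT2mul)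

/-- **Regularity of `M ⊗ M` implies regularity of `M ⊗ M^∨`.**
Let `M` be a finite-dimensional differential module over `K = ℂ((x))` and let
`M^∨ = Hom_K(M, K)` carry the dual derivation `(∂φ)(m) = (φ m)' - φ(∂m)`.
If `M ⊗_K M` is regular then so is `M ⊗_K M^∨`. -/
theorem tensor_dual_regular_of_tensor_square_regular
    (M : Type) [AddCommGroup M] [Module K M] [FiniteDimensional K M]
    (D : M → M) (hD : IsDerivation D)
    (DT : M ⊗[K] M → M ⊗[K] M) (hDT : IsDerivation DT)
    (hDTmul : ∀ (m n : M), DT (m ⊗ₜ n) = D m ⊗ₜ n + m ⊗ₜ D n)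
    (hreg : IsRegularDiff DT)
    (DD : (M →ₗ[K] K) → (M →ₗ[K] K)) (hDD : IsDerivation DD)
    (hDDapp : ∀ (φ : (M →ₗ[K] K)) (m : M), DD φ m = der (φ m) - φ (D m))
    (DT2 : M ⊗[K] (M →ₗ[K] K) → M ⊗[K] (M →ₗ[K] K)) (hDT2 : IsDerivation DT2)
    (hDT2mul : ∀ (m : M) (φ : (M →ₗ[K] K)),
      DT2 (m ⊗ₜ φ) = D m ⊗ₜ φ + m ⊗ₜ DD φ) :
    IsRegularDiff DT2 :=
  tensor_dual_regular_of_tensor_square_regular_general M D DT hDT hDTmul hreg DD hDDapp DT2 hDT2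
    hDT2mul
end
end

section
/- Let K = ℂ((x)) and M a finite-dimensional differential module over K. M is regular if and only if for every m ∈ M, the ℂ[[x]]-submodule of M generated by { (x∂)^k m : k ≥ 0 } is finitely generated over ℂ[[x]]. -/
noncomputable section

open scoped TensorProduct

/-! If `L` is an `x∂`-stable lattice, then, as `K = O[1/x]`, every `m` lies in `x^a L` for some
`a ∈ ℤ`, and `x^a L` is again stable because `x∂ (x^a l) = x^a (a l + x∂ l)`; so the saturation
of `m` lies in a finitely generated module over the noetherian ring `O`. Conversely, the
saturations of a `K`-basis span a finitely generated lattice, which is `x∂`-stable because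
`x f' ∈ O` for `f ∈ O`. -/

open HahnSeries Pointwise

lemma algebraMap_X_eq_single : algebraMap O K PowerSeries.X = single 1 1 :=
  ofPowerSeries_X

lemma coeff_xK_mul_der (f : K) (n : ℤ) : (xK * der f).coeff n = n • f.coeff n := by
  rw [xK, algebraMap_X_eq_single, der, LaurentSeries.derivative_apply]
  conv_lhs => rw [show n = (n - 1) + 1 by ring]
  rw [coeff_single_mul_add, one_mul, LaurentSeries.hasseDeriv_coeff]
  simp

lemma xK_mul_der_single (a : ℤ) (c : ℂ) : xK * der (single a c) = (a : K) * single a c := by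
  ext n
  rw [coeff_xK_mul_der, ← zsmul_eq_mul, coeff_smul]
  by_cases h : n = a <;> simp [h]

lemma exists_xK_mul_der_algebraMap (g : O) :
    ∃ g' : O, xK * der (algebraMap O K g) = algebraMap O K g' := by
  refine ⟨PowerSeries.mk fun n => n * PowerSeries.coeff n g, ?_⟩
  ext n
  simp only [coeff_xK_mul_der, LaurentSeries.coe_algebraMap, PowerSeries.coeff_coe]
  split_ifs with hn
  · simp
  · simp [zsmul_eq_mul, abs_of_nonneg (not_lt.mp hn)]

lemma Submodule.span_range_iterate_le {R N : Type*} [Semiring R] [AddCommMonoid N] [Module R N]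
    {T : N → N} {p : Submodule R N} (hT : Set.MapsTo T p p) {m : N} (hm : m ∈ p) :
    Submodule.span R (Set.range fun k : ℕ => T^[k] m) ≤ p :=
  Submodule.span_le.mpr <| Set.range_subset_iff.mpr fun k => hT.iterate k hm

section DifferentialModule

variable {M : Type*} [AddCommGroup M] [Module K M] {D : M → M}

instance : IsScalarTower O K M := IsScalarTower.of_algebraMap_smul fun _ _ => rfl

namespace IsDerivation

lemma map_zero_s11 (hD : IsDerivation D) : D 0 = 0 := by
  simpa using hD.1 0 0

lemma xK_smul_apply_smul (hD : IsDerivation D) (f : K) (m : M) :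
    xK • D (f • m) = (xK * der f) • m + f • xK • D m := by
  rw [hD.2, smul_add, smul_smul, smul_smul, smul_smul, mul_comm xK f]

lemma xK_smul_apply_smul_mem (hD : IsDerivation D) {p : Submodule O M} (g : O) {m : M}
    (hm : m ∈ p) (hTm : xK • D m ∈ p) : xK • D (g • m) ∈ p := by
  obtain ⟨g', hg'⟩ := exists_xK_mul_der_algebraMap g
  rw [← algebraMap_smul K g m, hD.xK_smul_apply_smul, hg', algebraMap_smul, algebraMap_smul]
  exact add_mem (p.smul_mem g' hm) (p.smul_mem g hTm)

lemma mapsTo_span (hD : IsDerivation D) {S : Set M}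
    (hS : Set.MapsTo (xK • D ·) S (Submodule.span O S)) :
    Set.MapsTo (xK • D ·) (Submodule.span O S) (Submodule.span O S) := by
  intro m hm
  induction hm using Submodule.span_induction with
  | mem x hx => exact hS hx
  | zero => simp [hD.map_zero_s11]
  | add x y _ _ hx hy =>
    show xK • D (x + y) ∈ _
    rw [hD.1, smul_add]
    exact add_mem hx hy
  | smul g x hx hTx => exact hD.xK_smul_apply_smul_mem g hx hTx

lemma mapsTo_single_smul (hD : IsDerivation D) {L : Submodule O M}
    (hL : Set.MapsTo (xK • D ·) L L) (a : ℤ) :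
    Set.MapsTo (xK • D ·) ↑((single a 1 : K) • L) ↑((single a 1 : K) • L) := by
  rintro _ ⟨l, hl, rfl⟩
  refine ⟨a • l + xK • D l, add_mem (zsmul_mem hl a) (hL hl), ?_⟩
  simp only [DistribSMul.toLinearMap_apply]
  rw [hD.xK_smul_apply_smul, xK_mul_der_single, mul_smul, Int.cast_smul_eq_zsmul, smul_add,
    smul_comm]

end IsDerivation

lemma mk'_one_X_pow (N : ℕ) :
    IsLocalization.mk' K (1 : O) (⟨PowerSeries.X ^ N, N, rfl⟩ : Submonoid.powers PowerSeries.X) =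
      single (-N : ℤ) 1 := by
  rw [IsLocalization.mk'_eq_iff_eq_mul, map_one, map_pow, algebraMap_X_eq_single, single_pow,
    single_mul_single]
  simp

lemma exists_mem_single_smul_of_span_eq_top {L : Submodule O M}
    (hL : Submodule.span K (L : Set M) = ⊤) (m : M) : ∃ a : ℤ, m ∈ (single a 1 : K) • L := by
  obtain ⟨l, hl, ⟨_, N, rfl⟩, rfl⟩ :=
    (IsLocalization.mem_span_iff (M := Submonoid.powers (PowerSeries.X : O)) (S := K)).mp
      (hL ▸ Submodule.mem_top : m ∈ Submodule.span K (L : Set M))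
  rw [Submodule.span_eq] at hl
  exact ⟨-N, mk'_one_X_pow N ▸ Submodule.smul_mem_pointwise_smul _ _ _ hl⟩

lemma IsRegularDiff.span_range_iterate_fg (hD : IsDerivation D) (hreg : IsRegularDiff D) (m : M) :
    (Submodule.span O (Set.range fun k : ℕ => (fun x => xK • D x)^[k] m)).FG := by
  obtain ⟨L, ⟨hLfg, hLspan⟩, hLT⟩ := hreg
  obtain ⟨a, hm⟩ := exists_mem_single_smul_of_span_eq_top hLspan m
  exact (hLfg.map _).of_le (Submodule.span_range_iterate_le (hD.mapsTo_single_smul hLT a) hm)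

lemma isRegularDiff_of_span_range_iterate_fg [FiniteDimensional K M] (hD : IsDerivation D)
    (hfg : ∀ m : M, (Submodule.span O (Set.range fun k : ℕ => (fun x => xK • D x)^[k] m)).FG) :
    IsRegularDiff D := by
  let b := Module.finBasis K M
  let S : Set M := ⋃ i, Set.range fun k : ℕ => (fun x => xK • D x)^[k] (b i)
  refine ⟨Submodule.span O S, ⟨?_, ?_⟩, hD.mapsTo_span ?_⟩
  · rw [Submodule.span_iUnion]
    exact Submodule.fg_iSup _ fun i => hfg (b i)
  · have hbS : Set.range b ⊆ S := Set.range_subset_iff.mpr fun i => Set.mem_iUnion.mpr ⟨i, 0, rfl⟩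
    rw [eq_top_iff, ← b.span_eq]
    exact Submodule.span_mono (hbS.trans Submodule.subset_span)
  · rintro _ ⟨_, ⟨i, rfl⟩, k, rfl⟩
    exact Submodule.subset_span <| Set.mem_iUnion.mpr
      ⟨i, k + 1, Function.iterate_succ_apply' (fun x => xK • D x) k (b i)⟩

end DifferentialModule

/-- **Saturation characterization of regularity.**
A finite-dimensional differential module `M` over `K = ℂ((x))` is regular if and only if
for every `m ∈ M` the `ℂ[[x]]`-submodule of `M` generated by `{(x∂)^k m : k ≥ 0}` is
finitely generated over `ℂ[[x]]`. -/
theorem regular_iff_saturation_fg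
    (M : Type) [AddCommGroup M] [Module K M] [FiniteDimensional K M]
    (D : M → M) (hD : IsDerivation D) :
    IsRegularDiff D ↔
      ∀ m : M, (Submodule.span O (Set.range fun k : ℕ => (fun x => xK • D x)^[k] m)).FG :=
  ⟨fun hreg => hreg.span_range_iterate_fg hD, isRegularDiff_of_span_range_iterate_fg hD⟩
end
end
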